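/- There exists a unique family of functions ā_n : W → W (n ≥ 0) such that: ā_0 is constantly 1; ā_n(x + y) = Σ_{i=0}^{n} ā_i(x)·ā_{n−i}(y) for all x, y ∈ W and all n ≥ 0; and ā_n(⟨α⟩) = ⟨αⁿ⟩ + (n(n−1)/2)·t_α for every α ∈ k^× and every n ≥ 1. Moreover these functions satisfy ā_1 = id and ā_n(0) = 0 for n ≥ 1, so they determine a power structure on the Grothendieck–Witt ring W = Ŵ(k). -/

import Mathlib

noncomputable section

/-- The ideal `R` of relations in the group ring `ℤ[k^×]`: generated by the elements
`⟨a⟩ − ⟨ab²⟩` for `a, b ∈ k^×`, and `⟨a⟩ + ⟨b⟩ − ⟨a+b⟩ − ⟨(a+b)ab⟩` for `a, b ∈ k^×`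
with `a + b ≠ 0` (the condition `a + b ≠ 0` being encoded by the existence of a unit
`c` with value `a + b`). -/
def GWIdeal (k : Type*) [Field k] : Ideal (MonoidAlgebra ℤ kˣ) :=
  Ideal.span
    ({x | ∃ a b : kˣ, x = MonoidAlgebra.of ℤ kˣ a - MonoidAlgebra.of ℤ kˣ (a * b ^ 2)} ∪
     {x | ∃ a b c : kˣ, (c : k) = (a : k) + (b : k) ∧
        x = MonoidAlgebra.of ℤ kˣ a + MonoidAlgebra.of ℤ kˣ b
            - MonoidAlgebra.of ℤ kˣ c - MonoidAlgebra.of ℤ kˣ (c * a * b)})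

/-- The Grothendieck–Witt ring of `k`, presented (Lam) as `ℤ[k^×]/R`. -/
abbrev GW (k : Type*) [Field k] := MonoidAlgebra ℤ kˣ ⧸ GWIdeal k

/-- `⟨a⟩`: the class in `W = ℤ[k^×]/R` of the basis element of `a ∈ k^×`. -/
def gw {k : Type*} [Field k] (a : kˣ) : GW k :=
  Ideal.Quotient.mk (GWIdeal k) (MonoidAlgebra.of ℤ kˣ a)

/-- `t_a := ⟨2⟩ + ⟨a⟩ − ⟨1⟩ − ⟨2a⟩ ∈ W` (for `k` of characteristic `≠ 2`, so that
`2` is a unit of `k`). -/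
def tGW {k : Type*} [Field k] (h2 : (2 : k) ≠ 0) (a : kˣ) : GW k :=
  gw (Units.mk0 (2 : k) h2) + gw a - gw 1 - gw (Units.mk0 (2 : k) h2 * a)

end

noncomputable section

open Finset

/-! ### Generic commutative-ring lemmas -/

section Generic

variable {R : Type*} [CommRing R]

lemma gwaux_pow_even {x : R} (hx : x * x = 1) {m : ℕ} (hm : Even m) : x ^ m = 1 := by
  obtain ⟨r, rfl⟩ := hm
  rw [← two_mul, pow_mul, sq, hx, one_pow]

lemma gwaux_pow_odd {x : R} (hx : x * x = 1) {m : ℕ} (hm : Odd m) : x ^ m = x := by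
  obtain ⟨r, rfl⟩ := hm
  rw [pow_add, pow_one, pow_mul, sq, hx, one_pow, one_mul]

lemma gwaux_H_step (x y : R) (hy : y * y = 1) (n : ℕ) :
    ∑ i ∈ range (n + 3), x ^ i * y ^ (n + 2 - i)
      = (∑ i ∈ range (n + 1), x ^ i * y ^ (n - i)) + x ^ (n + 1) * (y + x) := by
  rw [Finset.sum_range_succ, Finset.sum_range_succ]
  have h1 : ∀ i ∈ range (n + 1), x ^ i * y ^ (n + 2 - i) = x ^ i * y ^ (n - i) := by
    intro i hi
    have hi' : i ≤ n := Nat.lt_succ_iff.mp (Finset.mem_range.mp hi)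
    have e : n + 2 - i = (n - i) + 2 := by omega
    rw [e, pow_add, sq, hy, mul_one]
  rw [Finset.sum_congr rfl h1]
  have e1 : n + 2 - (n + 1) = 1 := by omega
  have e2 : n + 2 - (n + 2) = 0 := by omega
  rw [e1, e2, pow_one, pow_zero, mul_one]
  ring

lemma gwaux_H_eq (u v w z : R) (hu : u * u = 1) (hv : v * v = 1) (hw : w * w = 1)
    (hz : z * z = 1) (hs : u + v = w + z) (hp : u * v = w * z) (n : ℕ) :
    ∑ i ∈ range (n + 1), u ^ i * v ^ (n - i) = ∑ i ∈ range (n + 1), w ^ i * z ^ (n - i) := by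
  induction n using Nat.twoStepInduction with
  | zero => simp
  | one =>
    simp only [Finset.sum_range_succ, Finset.sum_range_one]
    norm_num
    linear_combination hs
  | more n ih _ =>
    have e3 : n + 2 + 1 = n + 3 := by omega
    rw [e3, gwaux_H_step u v hv n, gwaux_H_step w z hz n, ih]
    congr 1
    rcases Nat.even_or_odd (n + 1) with he | ho
    · rw [gwaux_pow_even hu he, gwaux_pow_even hw he]
      linear_combination hs
    · rw [gwaux_pow_odd hu ho, gwaux_pow_odd hw ho]
      linear_combination hp + hu - hw

lemma gwaux_decomp (Tx Ty x y : R) (hTT : Tx * Ty = 0) (n : ℕ) :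
    ∑ i ∈ range (n + 1),
        (x ^ i + (i * (i - 1) / 2) • Tx) * (y ^ (n - i) + ((n - i) * ((n - i) - 1) / 2) • Ty)
      = (∑ i ∈ range (n + 1), x ^ i * y ^ (n - i))
        + ∑ i ∈ range (n + 1), (i * (i - 1) / 2) • (Tx * y ^ (n - i) + x ^ (n - i) * Ty) := by
  have expand : ∀ i ∈ range (n + 1),
      (x ^ i + (i * (i - 1) / 2) • Tx) * (y ^ (n - i) + ((n - i) * ((n - i) - 1) / 2) • Ty)
        = x ^ i * y ^ (n - i) + ((i * (i - 1) / 2) • (Tx * y ^ (n - i))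
            + ((n - i) * ((n - i) - 1) / 2) • (x ^ i * Ty)) := by
    intro i _
    have h0 : ((i * (i - 1) / 2) • Tx) * (((n - i) * ((n - i) - 1) / 2) • Ty) = 0 := by
      rw [smul_mul_assoc, mul_smul_comm, hTT, smul_zero, smul_zero]
    rw [add_mul, mul_add, mul_add, h0, add_zero, smul_mul_assoc, mul_smul_comm]
    abel
  rw [Finset.sum_congr rfl expand, Finset.sum_add_distrib, Finset.sum_add_distrib]
  have hrefl : ∑ i ∈ range (n + 1), ((n - i) * ((n - i) - 1) / 2) • (x ^ i * Ty)
      = ∑ i ∈ range (n + 1), (i * (i - 1) / 2) • (x ^ (n - i) * Ty) := by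
    rw [← Finset.sum_range_reflect (fun j => (j * (j - 1) / 2) • (x ^ (n - j) * Ty)) (n + 1)]
    apply Finset.sum_congr rfl
    intro j hj
    have hj' : j ≤ n := Nat.lt_succ_iff.mp (Finset.mem_range.mp hj)
    have e1 : n + 1 - 1 - j = n - j := by omega
    have e2 : n - (n - j) = j := by omega
    rw [e1, e2]
  rw [hrefl, ← Finset.sum_add_distrib]
  congr 1
  apply Finset.sum_congr rfl
  intro i _
  rw [smul_add]

lemma gwaux_conv_eq (t2 u v w z : R) (hu : u * u = 1) (hv : v * v = 1) (hw : w * w = 1)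
    (hz : z * z = 1) (ht : t2 * t2 = 1) (e2 : 2 * t2 = 2)
    (eu : 2 * (t2 * u) = 2 * u) (ev : 2 * (t2 * v) = 2 * v)
    (ew : 2 * (t2 * w) = 2 * w) (ez : 2 * (t2 * z) = 2 * z)
    (euv : 2 * (t2 * (u * v)) = 2 * (u * v))
    (hs : u + v = w + z) (hp : u * v = w * z) (n : ℕ) :
    ∑ i ∈ range (n + 1),
        (u ^ i + (i * (i - 1) / 2) • ((t2 - 1) * (1 - u)))
          * (v ^ (n - i) + ((n - i) * ((n - i) - 1) / 2) • ((t2 - 1) * (1 - v)))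
      = ∑ i ∈ range (n + 1),
        (w ^ i + (i * (i - 1) / 2) • ((t2 - 1) * (1 - w)))
          * (z ^ (n - i) + ((n - i) * ((n - i) - 1) / 2) • ((t2 - 1) * (1 - z))) := by
  have TTuv : ((t2 - 1) * (1 - u)) * ((t2 - 1) * (1 - v)) = 0 := by
    linear_combination (1 - u - v + u * v) * ht - e2 + eu + ev - euv
  have ewz : 2 * (t2 * (w * z)) = 2 * (w * z) := by rw [← hp]; exact euv
  have TTwz : ((t2 - 1) * (1 - w)) * ((t2 - 1) * (1 - z)) = 0 := by
    linear_combination (1 - w - z + w * z) * ht - e2 + ew + ez - ewz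
  rw [gwaux_decomp _ _ _ _ TTuv, gwaux_decomp _ _ _ _ TTwz,
    gwaux_H_eq u v w z hu hv hw hz hs hp n]
  congr 1
  apply Finset.sum_congr rfl
  intro i _
  congr 1
  rcases Nat.even_or_odd (n - i) with he | ho
  · rw [gwaux_pow_even hv he, gwaux_pow_even hu he, gwaux_pow_even hz he, gwaux_pow_even hw he]
    linear_combination (1 - t2) * hs
  · rw [gwaux_pow_odd hv ho, gwaux_pow_odd hu ho, gwaux_pow_odd hz ho, gwaux_pow_odd hw ho]
    linear_combination (t2 - 1) * hs - 2 * (t2 - 1) * hp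

end Generic

/-! ### Basic identities in the Grothendieck–Witt ring -/

section GWBasic

variable {k : Type*} [Field k]

lemma gw_sq (a b : kˣ) : gw (k := k) (a * b ^ 2) = gw a := by
  refine ((Ideal.Quotient.eq).mpr ?_).symm
  exact Ideal.subset_span (Or.inl ⟨a, b, rfl⟩)

lemma gw_mul (a b : kˣ) : gw (k := k) (a * b) = gw a * gw b := by
  unfold gw
  rw [map_mul, map_mul]

lemma gw_one : gw (k := k) 1 = 1 := by
  unfold gw
  rw [map_one, map_one]

lemma gw_pow (a : kˣ) (n : ℕ) : gw (k := k) (a ^ n) = gw a ^ n := by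
  unfold gw
  rw [map_pow, map_pow]

lemma gw_rel (a b c : kˣ) (h : (c : k) = (a : k) + (b : k)) :
    gw a + gw b = gw c + gw (c * a * b) := by
  have hm : (MonoidAlgebra.of ℤ kˣ a + MonoidAlgebra.of ℤ kˣ b
      - MonoidAlgebra.of ℤ kˣ c - MonoidAlgebra.of ℤ kˣ (c * a * b)) ∈ GWIdeal k :=
    Ideal.subset_span (Or.inr ⟨a, b, c, h, rfl⟩)
  have h0 := Ideal.Quotient.eq_zero_iff_mem.mpr hm
  rw [map_sub, map_sub, map_add] at h0
  unfold gw
  linear_combination h0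

lemma gw_mul_self (a : kˣ) : gw (k := k) a * gw a = 1 := by
  have h : a * a = 1 * a ^ 2 := by rw [one_mul, sq]
  rw [← gw_mul, h, gw_sq, gw_one]

variable (h2 : (2 : k) ≠ 0)

lemma gw_two_x (x : kˣ) : 2 * gw (k := k) x = 2 * gw (Units.mk0 (2 : k) h2 * x) := by
  have hval : ((Units.mk0 (2 : k) h2 * x : kˣ) : k) = (x : k) + (x : k) := by
    rw [Units.val_mul, Units.val_mk0, two_mul]
  have h0 := gw_rel x x (Units.mk0 (2 : k) h2 * x) hval
  have h1 : Units.mk0 (2 : k) h2 * x * x * x = Units.mk0 (2 : k) h2 * x * x ^ 2 := by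
    rw [sq, mul_assoc]
  rw [h1, gw_sq] at h0
  linear_combination h0

lemma gw_e2 : 2 * gw (k := k) (Units.mk0 (2 : k) h2) = 2 := by
  have h0 := gw_two_x h2 (1 : kˣ)
  rw [mul_one, gw_one] at h0
  linear_combination -h0

lemma gw_ex (x : kˣ) : 2 * (gw (k := k) (Units.mk0 (2 : k) h2) * gw x) = 2 * gw x := by
  rw [← gw_mul]
  exact (gw_two_x h2 x).symm

lemma tGW_eq (a : kˣ) :
    tGW h2 a = (gw (Units.mk0 (2 : k) h2) - 1) * (1 - gw a) := by
  unfold tGW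
  rw [gw_one, gw_mul]
  ring

lemma tGW_sq (a b : kˣ) : tGW h2 (a * b ^ 2) = tGW h2 a := by
  unfold tGW
  have h1 : Units.mk0 (2 : k) h2 * (a * b ^ 2) = Units.mk0 (2 : k) h2 * a * b ^ 2 :=
    (mul_assoc _ _ _).symm
  rw [gw_sq, h1, gw_sq]

end GWBasic

/-! ### The exponential map into power series -/

section GWPower

variable {k : Type*} [Field k]

instance : CommGroup ((PowerSeries (GW k))ˣ) :=
  Units.instCommGroupUnits (α := PowerSeries (GW k))

variable (h2 : (2 : k) ≠ 0)

def FserGW (a : kˣ) : PowerSeries (GW k) :=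
  PowerSeries.mk fun n => gw a ^ n + (n * (n - 1) / 2) • tGW h2 a

lemma coeff_FserGW (a : kˣ) (n : ℕ) :
    PowerSeries.coeff n (FserGW h2 a) = gw a ^ n + (n * (n - 1) / 2) • tGW h2 a :=
  PowerSeries.coeff_mk _ _

lemma constantCoeff_FserGW (a : kˣ) :
    PowerSeries.constantCoeff (FserGW h2 a) = 1 := by
  rw [← PowerSeries.coeff_zero_eq_constantCoeff, coeff_FserGW]
  simp

def FunitGW (a : kˣ) : (PowerSeries (GW k))ˣ :=
  (PowerSeries.isUnit_iff_constantCoeff.mpr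
    (show IsUnit (PowerSeries.constantCoeff (FserGW h2 a)) from
      (constantCoeff_FserGW h2 a).symm ▸ isUnit_one)).unit

lemma FunitGW_val (a : kˣ) : (FunitGW h2 a : PowerSeries (GW k)) = FserGW h2 a :=
  rfl

lemma FserGW_sq (a b : kˣ) : FserGW h2 (a * b ^ 2) = FserGW h2 a := by
  unfold FserGW
  congr 1
  funext n
  rw [gw_sq, tGW_sq]

lemma FunitGW_sq (a b : kˣ) : FunitGW h2 (a * b ^ 2) = FunitGW h2 a :=
  Units.ext (by rw [FunitGW_val, FunitGW_val, FserGW_sq])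

lemma FserGW_rel (a b c : kˣ) (h : (c : k) = (a : k) + (b : k)) :
    FserGW h2 a * FserGW h2 b = FserGW h2 c * FserGW h2 (c * a * b) := by
  ext n
  rw [PowerSeries.coeff_mul, PowerSeries.coeff_mul,
    Finset.Nat.sum_antidiagonal_eq_sum_range_succ_mk,
    Finset.Nat.sum_antidiagonal_eq_sum_range_succ_mk]
  simp only [coeff_FserGW, tGW_eq]
  have hs := gw_rel a b c h
  have hcc : c * (c * a * b) = a * b * c ^ 2 := by
    ext
    push_cast
    ring
  have hp : gw (k := k) a * gw b = gw c * gw (c * a * b) := by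
    rw [← gw_mul, ← gw_mul, hcc, gw_sq]
  have heuv : 2 * (gw (Units.mk0 (2 : k) h2) * (gw (k := k) a * gw b)) = 2 * (gw a * gw b) := by
    have h0 := gw_ex h2 (a * b)
    rwa [gw_mul] at h0
  exact gwaux_conv_eq (gw (Units.mk0 (2 : k) h2)) (gw a) (gw b) (gw c) (gw (c * a * b)) (gw_mul_self a) (gw_mul_self b) (gw_mul_self c)
    (gw_mul_self (c * a * b)) (gw_mul_self _) (gw_e2 h2) (gw_ex h2 a) (gw_ex h2 b)
    (gw_ex h2 c) (gw_ex h2 (c * a * b)) heuv hs hp n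

lemma FunitGW_rel (a b c : kˣ) (h : (c : k) = (a : k) + (b : k)) :
    FunitGW h2 a * FunitGW h2 b = FunitGW h2 c * FunitGW h2 (c * a * b) :=
  Units.ext (by
    rw [Units.val_mul, Units.val_mul, FunitGW_val, FunitGW_val, FunitGW_val, FunitGW_val]
    exact FserGW_rel h2 a b c h)

def PhiGW : MonoidAlgebra ℤ kˣ →+ Additive (PowerSeries (GW k))ˣ :=
  (Finsupp.liftAddHom fun a => zmultiplesHom _ (Additive.ofMul (FunitGW h2 a))).comp
    MonoidAlgebra.coeffAddEquiv.toAddMonoidHom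

lemma PhiGW_single (a : kˣ) (m : ℤ) :
    PhiGW h2 (MonoidAlgebra.single a m) = m • Additive.ofMul (FunitGW h2 a) := by
  exact Finsupp.liftAddHom_apply_single _ a m

lemma PhiGW_of (a : kˣ) :
    PhiGW h2 (MonoidAlgebra.of ℤ kˣ a) = Additive.ofMul (FunitGW h2 a) := by
  rw [MonoidAlgebra.of_apply, PhiGW_single, one_smul]

lemma PhiGW_gen1 (c : kˣ) (m : ℤ) (a b : kˣ) :
    PhiGW h2 (MonoidAlgebra.single c m *
      (MonoidAlgebra.of ℤ kˣ a - MonoidAlgebra.of ℤ kˣ (a * b ^ 2))) = 0 := by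
  rw [mul_sub, MonoidAlgebra.of_apply, MonoidAlgebra.of_apply,
    MonoidAlgebra.single_mul_single, MonoidAlgebra.single_mul_single, mul_one,
    map_sub, PhiGW_single, PhiGW_single]
  have h1 : c * (a * b ^ 2) = c * a * b ^ 2 := (mul_assoc _ _ _).symm
  rw [h1, FunitGW_sq, sub_self]

lemma PhiGW_gen2 (d : kˣ) (m : ℤ) (a b c : kˣ) (h : (c : k) = (a : k) + (b : k)) :
    PhiGW h2 (MonoidAlgebra.single d m *
      (MonoidAlgebra.of ℤ kˣ a + MonoidAlgebra.of ℤ kˣ b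
        - MonoidAlgebra.of ℤ kˣ c - MonoidAlgebra.of ℤ kˣ (c * a * b))) = 0 := by
  have hrel : FunitGW h2 (d * a) * FunitGW h2 (d * b)
      = FunitGW h2 (d * c) * FunitGW h2 (d * (c * a * b)) := by
    have hval : ((d * c : kˣ) : k) = ((d * a : kˣ) : k) + ((d * b : kˣ) : k) := by
      push_cast
      rw [h]
      ring
    have h0 := FunitGW_rel h2 (d * a) (d * b) (d * c) hval
    have hcc : d * c * (d * a) * (d * b) = d * (c * a * b) * d ^ 2 := by
      ext
      push_cast
      ring
    rwa [hcc, FunitGW_sq] at h0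
  have hadd : Additive.ofMul (FunitGW h2 (d * a)) + Additive.ofMul (FunitGW h2 (d * b))
      - Additive.ofMul (FunitGW h2 (d * c))
      - Additive.ofMul (FunitGW h2 (d * (c * a * b))) = 0 := by
    rw [sub_sub, sub_eq_zero, ← ofMul_mul, ← ofMul_mul, hrel]
  rw [mul_sub, mul_sub, mul_add, MonoidAlgebra.of_apply, MonoidAlgebra.of_apply,
    MonoidAlgebra.of_apply, MonoidAlgebra.of_apply, MonoidAlgebra.single_mul_single,
    MonoidAlgebra.single_mul_single, MonoidAlgebra.single_mul_single,
    MonoidAlgebra.single_mul_single, mul_one, map_sub, map_sub, map_add,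
    PhiGW_single, PhiGW_single, PhiGW_single, PhiGW_single]
  rw [← smul_add, ← smul_sub, ← smul_sub, hadd, smul_zero]

lemma PhiGW_ker : ∀ x ∈ GWIdeal k, PhiGW h2 x = 0 := by
  intro x hx
  suffices h : ∀ q : MonoidAlgebra ℤ kˣ, PhiGW h2 (q * x) = 0 by
    have h1 := h 1
    rwa [one_mul] at h1
  unfold GWIdeal at hx
  induction hx using Submodule.span_induction with
  | mem y hy =>
    intro q
    induction q using MonoidAlgebra.induction with
    | zero =>
      rw [zero_mul, map_zero]
    | single_add c m f _ _ ih =>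
      rw [add_mul, map_add, ih, add_zero]
      rcases hy with ⟨a, b, rfl⟩ | ⟨a, b, cc, hcc, rfl⟩
      · exact PhiGW_gen1 h2 c m a b
      · exact PhiGW_gen2 h2 c m a b cc hcc
  | zero =>
    intro q
    rw [mul_zero, map_zero]
  | add x y hx hy ihx ihy =>
    intro q
    rw [mul_add, map_add, ihx q, ihy q, add_zero]
  | smul a x hx ih =>
    intro q
    rw [smul_eq_mul, ← mul_assoc]
    exact ih (q * a)

def PhiQGW (x : GW k) : Additive (PowerSeries (GW k))ˣ :=
  Quotient.liftOn' x (PhiGW h2) (fun p q hpq => by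
    have hmem : p - q ∈ GWIdeal k := (Submodule.quotientRel_def _).mp hpq
    have h0 := PhiGW_ker h2 _ hmem
    rw [map_sub] at h0
    exact sub_eq_zero.mp h0)

lemma PhiQGW_mk (p : MonoidAlgebra ℤ kˣ) :
    PhiQGW h2 (Ideal.Quotient.mk (GWIdeal k) p) = PhiGW h2 p := rfl

lemma PhiQGW_add (x y : GW k) : PhiQGW h2 (x + y) = PhiQGW h2 x + PhiQGW h2 y := by
  obtain ⟨p, rfl⟩ := Ideal.Quotient.mk_surjective x
  obtain ⟨q, rfl⟩ := Ideal.Quotient.mk_surjective y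
  rw [← map_add, PhiQGW_mk, PhiQGW_mk, PhiQGW_mk, map_add]

lemma PhiQGW_zero : PhiQGW h2 (0 : GW k) = 0 := by
  have h0 : (0 : GW k) = Ideal.Quotient.mk (GWIdeal k) 0 := (map_zero _).symm
  rw [h0, PhiQGW_mk, map_zero]

lemma PhiQGW_gw (a : kˣ) : PhiQGW h2 (gw a) = Additive.ofMul (FunitGW h2 a) := by
  unfold gw
  rw [PhiQGW_mk, PhiGW_of]

/-- The power structure. -/
def AcalGW (n : ℕ) (x : GW k) : GW k :=
  PowerSeries.coeff n ↑(Additive.toMul (PhiQGW h2 x))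

lemma PhiGW_cc (p : MonoidAlgebra ℤ kˣ) :
    Units.map ((PowerSeries.constantCoeff (R := GW k)) : PowerSeries (GW k) →* GW k)
      (Additive.toMul (PhiGW h2 p)) = 1 := by
  induction p using MonoidAlgebra.induction with
  | zero =>
    rw [map_zero, toMul_zero, map_one]
  | single_add a m f _ _ ih =>
    rw [map_add, toMul_add, map_mul, ih, mul_one, PhiGW_single, toMul_zsmul, toMul_ofMul,
      map_zpow]
    have h1 : Units.map ((PowerSeries.constantCoeff (R := GW k)) : PowerSeries (GW k) →* GW k)
        (FunitGW h2 a) = 1 := by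
      ext
      rw [Units.coe_map]
      exact constantCoeff_FserGW h2 a
    rw [h1, one_zpow]

lemma AcalGW_cc (x : GW k) :
    PowerSeries.constantCoeff (R := GW k) ↑(Additive.toMul (PhiQGW h2 x)) = 1 := by
  obtain ⟨p, rfl⟩ := Ideal.Quotient.mk_surjective x
  rw [PhiQGW_mk]
  have h0 := PhiGW_cc h2 p
  calc PowerSeries.constantCoeff (R := GW k) ↑(Additive.toMul (PhiGW h2 p))
      = ↑(Units.map ((PowerSeries.constantCoeff (R := GW k)) : PowerSeries (GW k) →* GW k)
          (Additive.toMul (PhiGW h2 p))) := rfl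
    _ = 1 := by rw [h0, Units.val_one]

lemma AcalGW_zero_coeff (x : GW k) : AcalGW h2 0 x = 1 := by
  unfold AcalGW
  rw [PowerSeries.coeff_zero_eq_constantCoeff]
  exact AcalGW_cc h2 x

lemma AcalGW_conv (n : ℕ) (x y : GW k) :
    AcalGW h2 n (x + y) = ∑ i ∈ range (n + 1), AcalGW h2 i x * AcalGW h2 (n - i) y := by
  unfold AcalGW
  rw [PhiQGW_add, toMul_add, Units.val_mul, PowerSeries.coeff_mul,
    Finset.Nat.sum_antidiagonal_eq_sum_range_succ_mk]

lemma AcalGW_gw (a : kˣ) (n : ℕ) :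
    AcalGW h2 n (gw a) = gw (a ^ n) + (n * (n - 1) / 2) • tGW h2 a := by
  unfold AcalGW
  rw [PhiQGW_gw, toMul_ofMul, FunitGW_val, coeff_FserGW, gw_pow]

lemma AcalGW_at_zero (n : ℕ) (hn : 1 ≤ n) : AcalGW h2 n 0 = 0 := by
  unfold AcalGW
  rw [PhiQGW_zero, toMul_zero, Units.val_one, PowerSeries.coeff_one, if_neg (by omega)]

lemma gw_mem_top (S : AddSubgroup (GW k)) (h : ∀ a : kˣ, gw a ∈ S) (x : GW k) : x ∈ S := by
  obtain ⟨p, rfl⟩ := Ideal.Quotient.mk_surjective x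
  induction p using MonoidAlgebra.induction with
  | zero =>
    rw [map_zero]
    exact S.zero_mem
  | single_add a m f _ _ ih =>
    rw [map_add]
    refine S.add_mem ?_ ih
    have h1 : (MonoidAlgebra.single a m : MonoidAlgebra ℤ kˣ) = m • MonoidAlgebra.of ℤ kˣ a := by
      rw [MonoidAlgebra.of_apply, MonoidAlgebra.smul_single', mul_one]
    rw [h1, map_zsmul]
    exact S.zsmul_mem (h a) m


lemma AcalGW_one (x : GW k) : AcalGW h2 1 x = x := by
  let S : AddSubgroup (GW k) :=
    { carrier := {x | AcalGW h2 1 x = x}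
      zero_mem' := AcalGW_at_zero h2 1 le_rfl
      add_mem' := by
        intro x y hx hy
        simp only [Set.mem_setOf_eq] at hx hy ⊢
        have h0 := AcalGW_conv h2 1 x y
        rw [Finset.sum_range_succ, Finset.sum_range_one, Nat.sub_self, Nat.sub_zero,
          AcalGW_zero_coeff, AcalGW_zero_coeff] at h0
        linear_combination h0 + hx + hy
      neg_mem' := by
        intro x hx
        simp only [Set.mem_setOf_eq] at hx ⊢
        have h0 := AcalGW_conv h2 1 x (-x)
        rw [add_neg_cancel, AcalGW_at_zero h2 1 le_rfl, Finset.sum_range_succ,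
          Finset.sum_range_one, Nat.sub_self, Nat.sub_zero, AcalGW_zero_coeff,
          AcalGW_zero_coeff] at h0
        linear_combination -h0 - hx }
  have hgen : ∀ a : kˣ, gw a ∈ S := by
    intro a
    show AcalGW h2 1 (gw a) = gw a
    have e : (1 * (1 - 1) / 2 : ℕ) = 0 := by norm_num
    rw [AcalGW_gw, e, zero_nsmul, add_zero, pow_one]
  exact gw_mem_top S hgen x

lemma family_zero (C : ℕ → GW k → GW k) (hC0 : ∀ x, C 0 x = 1)
    (hCc : ∀ (n : ℕ) (x y : GW k), C n (x + y) = ∑ i ∈ range (n + 1), C i x * C (n - i) y) :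
    ∀ n, 1 ≤ n → C n (0 : GW k) = 0 := by
  intro n
  induction n using Nat.strong_induction_on with
  | _ n ih =>
    intro hn
    obtain ⟨m, rfl⟩ : ∃ m, n = m + 1 := ⟨n - 1, by omega⟩
    have E := hCc (m + 1) 0 0
    rw [add_zero, Finset.sum_range_succ, Finset.sum_range_succ'] at E
    have hmid : ∑ i ∈ Finset.range m, C (i + 1) 0 * C (m + 1 - (i + 1)) 0 = 0 := by
      refine Finset.sum_eq_zero fun i hi => ?_
      rw [ih (i + 1) (by have := Finset.mem_range.mp hi; omega) (by omega)]
      ring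
    rw [hmid, Nat.sub_self, Nat.sub_zero, hC0] at E
    linear_combination -E

lemma family_unique (B : ℕ → GW k → GW k)
    (hB0 : ∀ x : GW k, B 0 x = 1)
    (hBc : ∀ (n : ℕ) (x y : GW k), B n (x + y) = ∑ i ∈ range (n + 1), B i x * B (n - i) y)
    (hB3 : ∀ (α : kˣ) (n : ℕ), 1 ≤ n → B n (gw α) = gw (α ^ n) + (n * (n - 1) / 2) • tGW h2 α) :
    ∀ (x : GW k) (n : ℕ), B n x = AcalGW h2 n x := by
  have hA0 : ∀ x : GW k, AcalGW h2 0 x = 1 := AcalGW_zero_coeff h2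
  have hBz := family_zero B hB0 hBc
  have hAz := AcalGW_at_zero h2
  let S : AddSubgroup (GW k) :=
    { carrier := {x | ∀ n, B n x = AcalGW h2 n x}
      zero_mem' := by
        intro n
        rcases Nat.eq_zero_or_pos n with rfl | hn
        · rw [hB0, hA0]
        · rw [hBz n hn, hAz n hn]
      add_mem' := by
        intro x y hx hy
        simp only [Set.mem_setOf_eq] at hx hy ⊢
        intro n
        rw [hBc n x y, AcalGW_conv h2 n x y]
        exact Finset.sum_congr rfl fun i _ => by rw [hx i, hy (n - i)]
      neg_mem' := by
        intro x hx
        simp only [Set.mem_setOf_eq] at hx ⊢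
        intro n
        induction n using Nat.strong_induction_on with
        | _ n ih =>
          rcases Nat.eq_zero_or_pos n with rfl | hn
          · rw [hB0, hA0]
          · have EB := hBc n x (-x)
            have EA := AcalGW_conv h2 n x (-x)
            rw [add_neg_cancel, hBz n hn] at EB
            rw [add_neg_cancel, hAz n hn] at EA
            obtain ⟨m, rfl⟩ : ∃ m, n = m + 1 := ⟨n - 1, by omega⟩
            rw [Finset.sum_range_succ'] at EB EA
            rw [hB0, Nat.sub_zero] at EB
            rw [hA0, Nat.sub_zero] at EA
            have hsum : ∑ i ∈ Finset.range (m + 1), B (i + 1) x * B (m + 1 - (i + 1)) (-x)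
                = ∑ i ∈ Finset.range (m + 1),
                    AcalGW h2 (i + 1) x * AcalGW h2 (m + 1 - (i + 1)) (-x) :=
              Finset.sum_congr rfl fun i _ => by
                rw [hx (i + 1), ih (m + 1 - (i + 1)) (by omega)]
            linear_combination -EB + EA - hsum }
  have hgen : ∀ a : kˣ, gw a ∈ S := by
    intro a
    show ∀ n, B n (gw a) = AcalGW h2 n (gw a)
    intro n
    rcases Nat.eq_zero_or_pos n with rfl | hn
    · rw [hB0, hA0]
    · rw [hB3 a n hn, AcalGW_gw h2 a n]
  intro x
  exact gw_mem_top S hgen x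

end GWPower

end

/-- There is a unique family of functions `ā_n : W → W` with `ā_0 ≡ 1`,
`ā_n(x+y) = Σ_{i=0}^{n} ā_i(x)·ā_{n−i}(y)`, and `ā_n(⟨α⟩) = ⟨αⁿ⟩ + (n(n−1)/2)·t_α`
for `α ∈ k^×` and `n ≥ 1`; moreover it satisfies `ā_1 = id` and `ā_n(0) = 0` for
`n ≥ 1`, so it determines a power structure on the Grothendieck–Witt ring `W`. -/
theorem exists_unique_power_structure_GW {k : Type*} [Field k] (h2 : (2 : k) ≠ 0) :
    ∃ A : ℕ → GW k → GW k,
      ((∀ x : GW k, A 0 x = 1) ∧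
       (∀ (n : ℕ) (x y : GW k),
          A n (x + y) = ∑ i ∈ Finset.range (n + 1), A i x * A (n - i) y) ∧
       (∀ (α : kˣ) (n : ℕ), 1 ≤ n →
          A n (gw α) = gw (α ^ n) + (n * (n - 1) / 2) • tGW h2 α)) ∧
      (∀ x : GW k, A 1 x = x) ∧
      (∀ n : ℕ, 1 ≤ n → A n 0 = 0) ∧
      (∀ B : ℕ → GW k → GW k,
        ((∀ x : GW k, B 0 x = 1) ∧
         (∀ (n : ℕ) (x y : GW k),
            B n (x + y) = ∑ i ∈ Finset.range (n + 1), B i x * B (n - i) y) ∧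
         (∀ (α : kˣ) (n : ℕ), 1 ≤ n →
            B n (gw α) = gw (α ^ n) + (n * (n - 1) / 2) • tGW h2 α)) →
        B = A) := by
  refine ⟨AcalGW h2, ⟨AcalGW_zero_coeff h2, AcalGW_conv h2, fun α n _ => AcalGW_gw h2 α n⟩,
    AcalGW_one h2, AcalGW_at_zero h2, ?_⟩
  rintro B ⟨hB0, hBc, hB3⟩
  funext n x
  exact family_unique h2 B hB0 hBc hB3 x n
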